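/- Let ψ be an abelian map on a group G and n ≥ 0. If the operation ∘_n is commutative (g ∘_n h = h ∘_n g for all g, h ∈ G), then ∘_{n+1} coincides with ∘_n; consequently g ∘_m h = g ∘_n h for all g, h ∈ G and all m ≥ n. -/

import Mathlib

/-!
Write `δ g = g · ψ(g)⁻¹`, so that `g = δⁿ(g) · ψ_n(g)` and `g ∘_n h = δⁿ(g) · h · ψ_n(g)`, where
`ψ_n(g)` lies in the abelian image of `ψ`. Commutativity of `∘_n` thus forces the elements
`δⁿ(g)` to commute pairwise; since `ψ(δⁿ g) = (δⁿ(δ g))⁻¹ · δⁿ(g)`, each `ψ(δⁿ g)` commutes with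
all `δⁿ(x)` and all `ψ_n(x)`, hence is central. As `δⁿ⁺¹(g) = δⁿ(g) · ψ(δⁿ g)⁻¹` and
`ψ_{n+1}(g) = ψ(δⁿ g) · ψ_n(g)`, this central factor cancels in `g ∘_{n+1} h`. Then `∘_{n+1} = ∘_n`
is again commutative, and induction on `m` gives the rest.
-/

/-- `aDelta ψ g = g · ψ(g⁻¹)`, the map `δ = 1 - ψ`. -/
def aDelta {G : Type*} [Group G] (ψ : G → G) (g : G) : G := g * ψ g⁻¹

/-- `aPsi ψ n g = (δⁿ(g))⁻¹ · g`, the map `ψ_n = -(1-ψ)ⁿ + 1` (so `ψ_0 = 0`, `ψ_1 = ψ`). -/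
def aPsi {G : Type*} [Group G] (ψ : G → G) (n : ℕ) (g : G) : G :=
  ((aDelta ψ)^[n] g)⁻¹ * g

/-- `g ∘_n h = g · ψ_n(g⁻¹) · h · ψ_n(g)`. -/
def aCirc {G : Type*} [Group G] (ψ : G → G) (n : ℕ) (g h : G) : G :=
  g * aPsi ψ n g⁻¹ * h * aPsi ψ n g

section AbelianMap

variable {G : Type*} [Group G]

theorem MonoidHom.commute_of_mem_range {H : Type*} [Group H] {f : G →* H}
    (hf : ∀ a b, Commute (f a) (f b)) {x y : H} (hx : x ∈ f.range) (hy : y ∈ f.range) :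
    Commute x y := by
  obtain ⟨a, rfl⟩ := hx
  obtain ⟨b, rfl⟩ := hy
  exact hf a b

theorem aDelta_apply (f : G →* G) (g : G) : aDelta f g = g * (f g)⁻¹ := by
  rw [aDelta, map_inv]

theorem iterate_aDelta_mul_aPsi (f : G → G) (n : ℕ) (g : G) :
    (aDelta f)^[n] g * aPsi f n g = g := by
  rw [aPsi, mul_inv_cancel_left]

theorem aPsi_succ (f : G →* G) (n : ℕ) (g : G) :
    aPsi f (n + 1) g = f ((aDelta f)^[n] g) * aPsi f n g := by
  rw [aPsi, aPsi, Function.iterate_succ_apply', aDelta_apply, mul_inv_rev, inv_inv, mul_assoc]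

theorem aPsi_mem_range (f : G →* G) (n : ℕ) (g : G) : aPsi f n g ∈ f.range := by
  induction n with
  | zero => simp [aPsi]
  | succ n ih => rw [aPsi_succ]; exact mul_mem ⟨_, rfl⟩ ih

theorem map_iterate_aDelta_inv {f : G →* G} (hf : ∀ a b, Commute (f a) (f b)) (n : ℕ) (g : G) :
    f ((aDelta f)^[n] g⁻¹) = (f ((aDelta f)^[n] g))⁻¹ := by
  induction n with
  | zero => exact map_inv f g
  | succ n ih =>
    simp only [Function.iterate_succ_apply', aDelta_apply, map_mul, map_inv, ih, inv_inv,
      mul_inv_rev]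
    exact (hf _ _).inv_left.eq

theorem aPsi_inv {f : G →* G} (hf : ∀ a b, Commute (f a) (f b)) (n : ℕ) (g : G) :
    aPsi f n g⁻¹ = (aPsi f n g)⁻¹ := by
  induction n with
  | zero => simp [aPsi]
  | succ n ih =>
    rw [aPsi_succ, aPsi_succ, map_iterate_aDelta_inv hf, ih, mul_inv_rev]
    exact (MonoidHom.commute_of_mem_range hf ⟨_, rfl⟩ (aPsi_mem_range f n g)).inv_inv.eq

theorem aCirc_eq {f : G →* G} (hf : ∀ a b, Commute (f a) (f b)) (n : ℕ) (g h : G) :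
    aCirc f n g h = (aDelta f)^[n] g * h * aPsi f n g := by
  rw [aCirc, aPsi_inv hf, aPsi, mul_inv_rev, inv_inv, mul_inv_cancel_left]

theorem aCirc_eq_iterate_aDelta_mul {f : G →* G} (hf : ∀ a b, Commute (f a) (f b))
    (n : ℕ) (g h : G) :
    aCirc f n g h = (aDelta f)^[n] g * (aDelta f)^[n] h * (aPsi f n h * aPsi f n g) := by
  rw [aCirc_eq hf]
  nth_rewrite 1 [← iterate_aDelta_mul_aPsi f n h]
  simp only [mul_assoc]

theorem commute_iterate_aDelta_of_comm {f : G →* G} (hf : ∀ a b, Commute (f a) (f b)) {n : ℕ}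
    (hcomm : ∀ g h, aCirc f n g h = aCirc f n h g) (g h : G) :
    Commute ((aDelta f)^[n] g) ((aDelta f)^[n] h) := by
  have key := hcomm g h
  rw [aCirc_eq_iterate_aDelta_mul hf, aCirc_eq_iterate_aDelta_mul hf,
    (MonoidHom.commute_of_mem_range hf (aPsi_mem_range f n h) (aPsi_mem_range f n g)).eq] at key
  exact mul_right_cancel key

theorem commute_map_iterate_aDelta_of_comm {f : G →* G} (hf : ∀ a b, Commute (f a) (f b))
    {n : ℕ} (hcomm : ∀ g h, aCirc f n g h = aCirc f n h g) (g x : G) :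
    Commute (f ((aDelta f)^[n] g)) x := by
  have hδ : (f ((aDelta f)^[n] g))⁻¹ = ((aDelta f)^[n] g)⁻¹ * (aDelta f)^[n] (aDelta f g) := by
    rw [← Function.iterate_succ_apply, Function.iterate_succ_apply', aDelta_apply,
      inv_mul_cancel_left]
  have hdelta : Commute (f ((aDelta f)^[n] g)) ((aDelta f)^[n] x) := by
    refine Commute.inv_left_iff.mp ?_
    rw [hδ]
    exact ((commute_iterate_aDelta_of_comm hf hcomm g x).inv_left).mul_left
      (commute_iterate_aDelta_of_comm hf hcomm _ x)
  have hpsi : Commute (f ((aDelta f)^[n] g)) (aPsi f n x) :=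
    MonoidHom.commute_of_mem_range hf ⟨_, rfl⟩ (aPsi_mem_range f n x)
  rw [← iterate_aDelta_mul_aPsi f n x]
  exact hdelta.mul_right hpsi

theorem aCirc_succ_eq_of_comm {f : G →* G} (hf : ∀ a b, Commute (f a) (f b)) {n : ℕ}
    (hcomm : ∀ g h, aCirc f n g h = aCirc f n h g) (g h : G) :
    aCirc f (n + 1) g h = aCirc f n g h := by
  have hcentral := commute_map_iterate_aDelta_of_comm hf hcomm g h
  rw [aCirc_eq hf, aCirc_eq hf, aPsi_succ, Function.iterate_succ_apply', aDelta_apply,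
    mul_assoc _ h, ← mul_assoc h, ← hcentral.eq]
  group

end AbelianMap

/-- If `∘_n` is commutative then `∘_{n+1} = ∘_n`, hence, `∘_m = ∘_n` for all `m ≥ n`. -/
theorem stmt8 {G : Type*} [Group G] (ψ : G → G)
    (hψ : ∀ a b : G, ψ (a * b) = ψ a * ψ b)
    (hab : ∀ a b : G, ψ a * ψ b = ψ b * ψ a)
    (n : ℕ) (hcomm : ∀ g h : G, aCirc ψ n g h = aCirc ψ n h g) :
    (∀ g h : G, aCirc ψ (n + 1) g h = aCirc ψ n g h) ∧
    (∀ m : ℕ, n ≤ m → ∀ g h : G, aCirc ψ m g h = aCirc ψ n g h) := by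
  obtain ⟨f, rfl⟩ : ∃ f : G →* G, ⇑f = ψ := ⟨MonoidHom.mk' ψ hψ, rfl⟩
  refine ⟨aCirc_succ_eq_of_comm hab hcomm, fun m hm => ?_⟩
  induction m, hm using Nat.le_induction with
  | base => exact fun _ _ => rfl
  | succ m _ ih =>
    have hcomm_m : ∀ g h, aCirc f m g h = aCirc f m h g := fun g h => by rw [ih, ih, hcomm]
    exact fun g h => by rw [aCirc_succ_eq_of_comm hab hcomm_m, ih]
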